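/- If the renamed knowledge base K* together with the unit clause Neg(D) is unsatisfiable, then T entails D from the empty ABox: T ⊨ D (equivalently, T ∪ {¬D} is unsatisfiable). -/
import Mathlib


/-- A clause `H ← B`: head and body are finite sets of ground atoms. -/
structure Clause (α : Type) where
  head : Finset α
  body : Finset α
deriving DecidableEq

/-- An interpretation (a set of ground atoms) satisfies the clause `H ← B`. -/
def satClause {α : Type} (I : Set α) (C : Clause α) : Prop :=
  (∀ b ∈ C.body, b ∈ I) → ∃ h ∈ C.head, h ∈ I

/-- An interpretation satisfies a set of clauses. -/
def satSet {α : Type} (I : Set α) (N : Set (Clause α)) : Prop :=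
  ∀ C ∈ N, satClause I C

/-- `T ∪ A ⊨ D`: every model of `T` containing all atoms of `A` satisfies `D`. -/
def entails {α : Type} (T : Set (Clause α)) (A : Set α) (D : α) : Prop :=
  ∀ I : Set α, satSet I T → A ⊆ I → D ∈ I

/-- `T ∪ A` is consistent: some model of `T` contains all atoms of `A`. -/
def consistentWith {α : Type} (T : Set (Clause α)) (A : Set α) : Prop :=
  ∃ I : Set α, satSet I T ∧ A ⊆ I

variable {V : Type} [DecidableEq V]

/-- Extended signature: original atoms, fresh `Neg`-atoms and fresh
`ABox`-atoms. -/
abbrev Atom (V : Type) : Type := V ⊕ (V ⊕ V)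

/-- An original atom. -/
def orig (v : V) : Atom V := Sum.inl v

/-- The fresh atom `Neg(v)`. -/
def neg (v : V) : Atom V := Sum.inr (Sum.inl v)

/-- The fresh atom `ABox(v)`. -/
def abox (v : V) : Atom V := Sum.inr (Sum.inr v)

/-- A clause over `V` viewed over the extended signature. -/
def embedClause (C : Clause V) : Clause (Atom V) :=
  ⟨C.head.image orig, C.body.image orig⟩

/-- The renamed clause `((H \ S) ∪ Neg(B ∩ S)) ← ((B \ S) ∪ Neg(H ∩ S))`. -/
def renameClause (S : Finset V) (C : Clause V) : Clause (Atom V) :=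
  ⟨((C.head \ S).image orig) ∪ ((C.body ∩ S).image neg),
   ((C.body \ S).image orig) ∪ ((C.head ∩ S).image neg)⟩

/-- The exclusion clause `⊥ ← p ∧ Neg(p)`. -/
def exclClause (p : V) : Clause (Atom V) :=
  ⟨∅, {orig p, neg p}⟩

/-- A unit fact `a ← ⊤`. -/
def fact (a : Atom V) : Clause (Atom V) := ⟨{a}, ∅⟩

/-- `K* = R_S(T) ∪ {ABox(a) | a ∈ A}`, where `S` is the set of atoms of the
ABox `A`: each original clause, its renamed version, the exclusion clauses for
`p ∈ S`, and the fresh `ABox` facts. -/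
def Kstar (T : Set (Clause V)) (A : Finset V) : Set (Clause (Atom V)) :=
  (embedClause '' T) ∪ (renameClause A '' T) ∪
    {C | ∃ p ∈ A, C = exclClause p} ∪ {C | ∃ a ∈ A, C = fact (abox a)}

/-- `Del(M) = { a ∈ A | Neg(a) ∈ M }`. -/
def Del (A : Finset V) (M : Set (Atom V)) : Set V :=
  {a : V | a ∈ A ∧ neg a ∈ M}

/-- if `K* ∪ {Neg(D)}` is unsatisfiable, then `T ⊨ D` already
from the empty ABox. -/
theorem kstar_unsat_implies_entails
    (T : Set (Clause V)) (A : Finset V) (D : V) (hD : D ∈ A)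
    (hunsat : ¬ ∃ M : Set (Atom V), satSet M (Kstar T A ∪ {fact (neg D)})) :
    entails T (∅ : Set V) D := by
  intro I hI _
  by_contra hDI
  apply hunsat
  refine ⟨(fun x => match x with
    | Sum.inl v => v ∈ I
    | Sum.inr (Sum.inl v) => v ∉ I
    | Sum.inr (Sum.inr _) => True), ?_⟩
  intro C hC
  rcases hC with (((⟨C0, hC0, rfl⟩ | ⟨C0, hC0, rfl⟩) | ⟨p, hp, rfl⟩) | ⟨a, ha, rfl⟩) | hC
  · -- embedClause
    intro hb
    obtain ⟨h, hh, hhI⟩ := hI C0 hC0 (fun b hb' => hb (orig b) (Finset.mem_image_of_mem _ hb'))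
    exact ⟨orig h, Finset.mem_image_of_mem _ hh, hhI⟩
  · -- renameClause
    intro hb
    by_cases hB : ∀ b ∈ C0.body, b ∈ I
    · obtain ⟨h, hh, hhI⟩ := hI C0 hC0 hB
      have hhA : h ∉ A := by
        intro hhA
        exact hb (neg h) (Finset.mem_union_right _
          (Finset.mem_image_of_mem _ (Finset.mem_inter.2 ⟨hh, hhA⟩))) hhI
      exact ⟨orig h, Finset.mem_union_left _
        (Finset.mem_image_of_mem _ (Finset.mem_sdiff.2 ⟨hh, hhA⟩)), hhI⟩
    · push_neg at hB
      obtain ⟨b, hbB, hbI⟩ := hB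
      have hbA : b ∈ A := by
        by_contra hbA
        exact hbI (hb (orig b) (Finset.mem_union_left _
          (Finset.mem_image_of_mem _ (Finset.mem_sdiff.2 ⟨hbB, hbA⟩))))
      exact ⟨neg b, Finset.mem_union_right _
        (Finset.mem_image_of_mem _ (Finset.mem_inter.2 ⟨hbB, hbA⟩)), hbI⟩
  · -- exclClause
    intro hb
    have h1 := hb (orig p) (by simp [exclClause])
    have h2 := hb (neg p) (by simp [exclClause, orig, neg])
    exact absurd h1 h2
  · -- abox fact
    intro _
    exact ⟨abox a, by simp [fact], trivial⟩
  · -- neg D fact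
    rcases hC with rfl
    intro _
    exact ⟨neg D, by simp [fact], hDI⟩
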